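/- arXiv:2207.04931 — 2 statements merged into one kernel-verified Lean document; each statement's English description precedes it below -/
import Mathlib

section
/- For m = 2 bins, every online bin stretching algorithm A satisfies sup_{I a bin-stretching instance} R(I,A) ≥ 4/3. -/
/-- A bin-stretching instance for `m` bins: a finite sequence of strictly positive reals
that can be partitioned into `m` parts, each of total size at most `1`. -/
def IsBSInstance (m : ℕ) (I : List ℝ) : Prop :=
  (∀ x ∈ I, 0 < x) ∧
  ∃ P : Fin I.length → Fin m,
    ∀ i : Fin m, ∑ j ∈ Finset.univ.filter (fun j => P j = i), I.get j ≤ 1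

/-- Run an online algorithm `A` (which, given the previously received items, the new item and
the current partition — as an assignment of item indices to bins — returns the bin for the
new item) on the list of items `I`.  Returns the list of bin choices, one for each item. -/
def runBS (A : List ℝ → ℝ → (ℕ → ℕ) → ℕ) (I : List ℝ) : List ℕ :=
  (I.foldl
    (fun (acc : List ℝ × List ℕ) (x : ℝ) =>
      (acc.1 ++ [x], acc.2 ++ [A acc.1 x (fun j => acc.2.getD j 0)]))
    (([] : List ℝ), ([] : List ℕ))).2

/-- The load of bin `i` when the items of `I` are assigned to bins according to `P`. -/
def binLoad (I : List ℝ) (P : ℕ → ℕ) (i : ℕ) : ℝ :=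
  ∑ j ∈ Finset.range I.length, if P j = i then I.getD j 0 else 0

/-- The result `R(I, A)` of the algorithm `A` on the instance `I` : the load of the fullest
of the `m` bins after `A` has placed all items of `I`. -/
noncomputable def resultBS (m : ℕ) (A : List ℝ → ℝ → (ℕ → ℕ) → ℕ) (I : List ℝ) : ℝ :=
  ⨆ i : Fin m, binLoad I (fun j => (runBS A I).getD j 0) (i : ℕ)

/-!
An adversary first releases two items of size `1/3`. If the algorithm separates them, an item
of size `1` follows and must join one of them. If it puts them together, two items of size `2/3`
follow: either one of them joins the pair, or both share the other bin. Each of the two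
sequences fits into two unit bins, yet in every case some bin ends with load at least `4/3`.
-/

lemma binLoad_nil (P : ℕ → ℕ) (i : ℕ) : binLoad [] P i = 0 := by
  simp [binLoad]

lemma binLoad_concat (I : List ℝ) (x : ℝ) (P : ℕ → ℕ) (i : ℕ) :
    binLoad (I ++ [x]) P i = binLoad I P i + if P I.length = i then x else 0 := by
  rw [binLoad, List.length_append, List.length_singleton, Finset.sum_range_succ,
    List.getD_append_right _ _ _ _ le_rfl, Nat.sub_self, List.getD_cons_zero]
  congr 1
  refine Finset.sum_congr rfl fun j hj => ?_
  rw [List.getD_append _ _ _ _ (Finset.mem_range.mp hj)]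

lemma binLoad_congr {I : List ℝ} {P Q : ℕ → ℕ} (h : ∀ j < I.length, P j = Q j) (i : ℕ) :
    binLoad I P i = binLoad I Q i :=
  Finset.sum_congr rfl fun j hj => by rw [h j (Finset.mem_range.mp hj)]

lemma binLoad_le_sum {I : List ℝ} (hI : ∀ x ∈ I, 0 ≤ x) (P : ℕ → ℕ) (i : ℕ) :
    binLoad I P i ≤ I.sum := by
  induction I using List.reverseRecOn with
  | nil => simp [binLoad_nil]
  | append_singleton I x ih =>
    have hx : 0 ≤ x := hI x (by simp)
    rw [binLoad_concat, List.sum_append, List.sum_singleton]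
    gcongr
    · exact ih fun y hy => hI y (List.mem_append_left _ hy)
    · split_ifs <;> simp [hx]

lemma IsBSInstance.sum_le {m : ℕ} {I : List ℝ} (hI : IsBSInstance m I) : I.sum ≤ m := by
  obtain ⟨-, P, hP⟩ := hI
  calc I.sum = ∑ j : Fin I.length, I.get j := (Fin.sum_univ_getElem I).symm
    _ = ∑ i : Fin m, ∑ j ∈ Finset.univ.filter (fun j => P j = i), I.get j :=
      (Finset.sum_fiberwise Finset.univ P _).symm
    _ ≤ ∑ _i : Fin m, (1 : ℝ) := Finset.sum_le_sum fun i _ => hP i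
    _ = m := by simp

lemma isBSInstance_thirds_one : IsBSInstance 2 [1/3, 1/3, 1] := by
  refine ⟨by norm_num, ![0, 0, 1], fun i => ?_⟩
  fin_cases i <;> simp [Finset.sum_filter, Fin.sum_univ_succ]; norm_num

lemma isBSInstance_thirds_two_thirds : IsBSInstance 2 [1/3, 1/3, 2/3, 2/3] := by
  refine ⟨by norm_num, ![0, 1, 0, 1], fun i => ?_⟩
  fin_cases i <;> simp [Finset.sum_filter, Fin.sum_univ_succ] <;> norm_num

section Online

variable (A : List ℝ → ℝ → (ℕ → ℕ) → ℕ)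

def nextBin (I : List ℝ) (x : ℝ) : ℕ :=
  A I x (fun j => (runBS A I).getD j 0)

def loadBS (I : List ℝ) (i : ℕ) : ℝ :=
  binLoad I (fun j => (runBS A I).getD j 0) i

lemma runBS_concat (I : List ℝ) (x : ℝ) :
    runBS A (I ++ [x]) = runBS A I ++ [nextBin A I x] := by
  have hitems : ∀ (J : List ℝ) (acc : List ℝ × List ℕ),
      (J.foldl (fun acc x => (acc.1 ++ [x], acc.2 ++ [A acc.1 x (fun j => acc.2.getD j 0)]))
        acc).1 = acc.1 ++ J := by
    intro J
    induction J with
    | nil => simp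
    | cons y J ih =>
      intro acc
      simp only [List.foldl_cons, ih, List.append_assoc, List.singleton_append]
  simp only [runBS, nextBin, List.foldl_concat, hitems, List.nil_append]

lemma length_runBS (I : List ℝ) : (runBS A I).length = I.length := by
  induction I using List.reverseRecOn with
  | nil => rfl
  | append_singleton I x ih => simp [runBS_concat, ih]

lemma loadBS_nil (i : ℕ) : loadBS A [] i = 0 :=
  binLoad_nil _ i

lemma loadBS_concat (I : List ℝ) (x : ℝ) (i : ℕ) :
    loadBS A (I ++ [x]) i = loadBS A I i + if nextBin A I x = i then x else 0 := by
  have hlen := length_runBS A I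
  rw [loadBS, runBS_concat, binLoad_concat, List.getD_append_right _ _ _ _ hlen.le, hlen,
    Nat.sub_self, List.getD_cons_zero, loadBS]
  congr 1
  exact binLoad_congr (fun j hj => List.getD_append _ _ _ _ (hlen ▸ hj)) i

lemma loadBS_le_resultBS {m : ℕ} (I : List ℝ) (i : Fin m) : loadBS A I i ≤ resultBS m A I :=
  le_ciSup (Finite.bddAbove_range fun i : Fin m => loadBS A I i) i

lemma resultBS_le {m : ℕ} {I : List ℝ} (hI : IsBSInstance m I) : resultBS m A I ≤ m :=
  Real.iSup_le (fun _ => (binLoad_le_sum (fun x hx => (hI.1 x hx).le) _ _).trans hI.sum_le)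
    (Nat.cast_nonneg m)

lemma loadBS_thirds (i : ℕ) :
    loadBS A [1/3, 1/3] i = (if nextBin A [] (1/3) = i then 1/3 else 0)
      + (if nextBin A [1/3] (1/3) = i then 1/3 else 0) := by
  rw [show ([1/3, 1/3] : List ℝ) = [] ++ [1/3] ++ [1/3] from rfl, loadBS_concat, loadBS_concat,
    loadBS_nil, zero_add]
  rfl

lemma exists_four_thirds_le_loadBS_of_split (hA : ∀ I y P, A I y P < 2)
    (hsplit : nextBin A [] (1/3) ≠ nextBin A [1/3] (1/3)) :
    ∃ I, IsBSInstance 2 I ∧ ∃ i < 2, 4/3 ≤ loadBS A I i := by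
  have h₀ : nextBin A [] (1/3) < 2 := hA _ _ _
  have h₁ : nextBin A [1/3] (1/3) < 2 := hA _ _ _
  have h₂ : nextBin A [1/3, 1/3] 1 < 2 := hA _ _ _
  refine ⟨[1/3, 1/3] ++ [1], isBSInstance_thirds_one, _, h₂, ?_⟩
  rw [loadBS_concat, loadBS_thirds]
  generalize nextBin A [] (1/3) = b₀ at *
  generalize nextBin A [1/3] (1/3) = b₁ at *
  generalize nextBin A [1/3, 1/3] 1 = b₂ at *
  split_ifs <;> first | omega | norm_num

lemma exists_four_thirds_le_loadBS_of_paired (hA : ∀ I y P, A I y P < 2)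
    (hpaired : nextBin A [] (1/3) = nextBin A [1/3] (1/3)) :
    ∃ I, IsBSInstance 2 I ∧ ∃ i < 2, 4/3 ≤ loadBS A I i := by
  have hload : ∀ i, loadBS A ([1/3, 1/3] ++ [2/3] ++ [2/3]) i =
      (if nextBin A [1/3] (1/3) = i then 2/3 else 0)
      + (if nextBin A [1/3, 1/3] (2/3) = i then 2/3 else 0)
      + (if nextBin A ([1/3, 1/3] ++ [2/3]) (2/3) = i then 2/3 else 0) := by
    intro i
    rw [loadBS_concat, loadBS_concat, loadBS_thirds, hpaired]
    split_ifs <;> norm_num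
  have hb : nextBin A [1/3] (1/3) < 2 := hA _ _ _
  have hc : nextBin A [1/3, 1/3] (2/3) < 2 := hA _ _ _
  have hd : nextBin A ([1/3, 1/3] ++ [2/3]) (2/3) < 2 := hA _ _ _
  refine ⟨[1/3, 1/3] ++ [2/3] ++ [2/3], isBSInstance_thirds_two_thirds, ?_⟩
  simp only [hload]
  generalize nextBin A [1/3] (1/3) = b at *
  generalize nextBin A [1/3, 1/3] (2/3) = c at *
  generalize nextBin A ([1/3, 1/3] ++ [2/3]) (2/3) = d at *
  by_cases hcb : c = b
  · exact ⟨b, hb, by split_ifs <;> first | omega | norm_num⟩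
  by_cases hdb : d = b
  · exact ⟨b, hb, by split_ifs <;> first | omega | norm_num⟩
  · exact ⟨c, hc, by split_ifs <;> first | omega | norm_num⟩

lemma exists_four_thirds_le_loadBS (hA : ∀ I y P, A I y P < 2) :
    ∃ I, IsBSInstance 2 I ∧ ∃ i < 2, 4/3 ≤ loadBS A I i :=
  (em _).elim (exists_four_thirds_le_loadBS_of_paired A hA)
    (exists_four_thirds_le_loadBS_of_split A hA)

end Online

/-- For `m = 2` bins, every online bin stretching algorithm `A` satisfies
`sup_I R(I, A) ≥ 4/3`, the supremum being over all bin-stretching instances `I`. -/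
theorem two_bins_lower_bound (A : List ℝ → ℝ → (ℕ → ℕ) → ℕ)
    (hA : ∀ I y P, A I y P < 2) :
    (4 : ℝ) / 3 ≤ sSup {r : ℝ | ∃ I : List ℝ, IsBSInstance 2 I ∧ resultBS 2 A I = r} := by
  obtain ⟨I, hI, i, hi, hload⟩ := exists_four_thirds_le_loadBS A hA
  have hbdd : BddAbove {r : ℝ | ∃ I : List ℝ, IsBSInstance 2 I ∧ resultBS 2 A I = r} :=
    ⟨2, by rintro r ⟨J, hJ, rfl⟩; exact_mod_cast resultBS_le A hJ⟩
  exact le_csSup_of_le hbdd ⟨I, hI, rfl⟩ (hload.trans (loadBS_le_resultBS A I ⟨i, hi⟩))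
end

section
/- Fix integers S ≥ 0, g ≥ 1 and m ≥ 1 with S ≤ m·g. For every b ∈ P_{S,g,m}, f(b) equals the number of tuples b' ∈ P_{S,g,m} that are strictly smaller than b in the lexicographic order: f(b) = |{b' ∈ P_{S,g,m} : b' <_lex b}|. -/
/-- `P_{S,k,n}`: the set of non-increasing `n`-tuples of natural numbers with all
coordinates at most `k` and coordinate sum exactly `S`. -/
def PSkn (S k n : ℕ) : Set (Fin n → ℕ) :=
  {b | Antitone b ∧ (∀ i, b i ≤ k) ∧ (∑ i, b i) = S}

/-- `N_{S,k,n}`: the cardinality of `P_{S,k,n}`. -/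
noncomputable def NSkn (S k n : ℕ) : ℕ :=
  Nat.card (PSkn S k n)

/-- The index `f(b)` of a tuple `b ∈ P_{S,g,m}`: writing `r` for the number of nonzero
coordinates of `b` (the largest index with `b_r ≠ 0`, since `b` is non-increasing) and
`S_i = S − Σ_{j=1}^{i} b_j`, we set `f(b) = Σ_{i=0}^{r−1} N_{S_i, b_{i+1}−1, m−i}`
(for `S = 0` this is the empty sum, so `f` of the zero tuple is `0`). -/
noncomputable def fIdx (S : ℕ) {m : ℕ} (b : Fin m → ℕ) : ℕ :=
  ∑ i : Fin m,
    if (i : ℕ) < (Finset.univ.filter (fun j : Fin m => b j ≠ 0)).card then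
      NSkn (S - ∑ j ∈ Finset.univ.filter (fun j : Fin m => j < i), b j)
        (b i - 1) (m - (i : ℕ))
    else 0

/-! The tuples `b' <_lex b` are partitioned by the first coordinate `i + 1` at which `b'`
differs from `b`, where `b'_{i+1} < b_{i+1}`. Deleting the first `i` coordinates, which agree
with those of `b`, identifies that part with `P_{S_i, b_{i+1} - 1, m - i}`: since `b'` is
non-increasing, `b'_{i+1} < b_{i+1}` bounds its whole tail. The part is empty when
`b_{i+1} = 0`, that is, for `i ≥ r`. -/

open Finset
open scoped Function

section Suffix

variable {m : ℕ} {α : Type*}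

def suffixFrom (a : Fin m → α) (i : Fin m) : Fin (m - i) → α :=
  fun t => a ⟨i + t, by omega⟩

def glueSuffix (b : Fin m → α) (i : Fin m) (c : Fin (m - i) → α) : Fin m → α :=
  fun j => if (j : ℕ) < i then b j else c ⟨j - i, by omega⟩

lemma glueSuffix_of_lt (b : Fin m → α) {i j : Fin m} (c : Fin (m - i) → α) (h : j < i) :
    glueSuffix b i c j = b j :=
  if_pos h

lemma glueSuffix_self (b : Fin m → α) (i : Fin m) (c : Fin (m - i) → α) :
    glueSuffix b i c i = c ⟨0, by omega⟩ := by
  simp [glueSuffix]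

lemma suffixFrom_glueSuffix (b : Fin m → α) (i : Fin m) (c : Fin (m - i) → α) :
    suffixFrom (glueSuffix b i c) i = c := by
  funext t
  simp [suffixFrom, glueSuffix]

lemma glueSuffix_suffixFrom {a b : Fin m → α} {i : Fin m} (h : ∀ j < i, a j = b j) :
    glueSuffix b i (suffixFrom a i) = a := by
  funext j
  by_cases hj : j < i
  · rw [glueSuffix_of_lt _ _ hj, h j hj]
  · simp only [glueSuffix, suffixFrom, Fin.lt_def.not.mp hj, if_false]
    congr 1
    ext
    simp only
    omega

lemma sum_eq_sum_lt_add_sum_suffixFrom {M : Type*} [AddCommMonoid M] (a : Fin m → M)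
    (i : Fin m) : ∑ j, a j = ∑ j ∈ univ.filter (· < i), a j + ∑ t, suffixFrom a i t := by
  rw [← sum_filter_add_sum_filter_not univ (· < i)]
  congr 1
  symm
  refine sum_bij (fun t _ => ⟨i + t, by omega⟩) (fun t _ => ?_) (fun t _ t' _ h => ?_)
    (fun j hj => ?_) (fun _ _ => rfl)
  · simp only [mem_filter, mem_univ, true_and, not_lt, Fin.le_def]
    omega
  · ext
    simpa using congrArg Fin.val h
  · simp only [mem_filter, mem_univ, true_and, not_lt, Fin.le_def] at hj
    exact ⟨⟨j - i, by omega⟩, mem_univ _, by ext; simp only; omega⟩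

lemma Antitone.suffixFrom [Preorder α] {a : Fin m → α} (ha : Antitone a) (i : Fin m) :
    Antitone (suffixFrom a i) :=
  fun _ _ h => ha (by simp only [Fin.le_def] at h ⊢; omega)

lemma Antitone.glueSuffix [Preorder α] {b : Fin m → α} {i : Fin m} {c : Fin (m - i) → α}
    (hb : Antitone b) (hc : Antitone c) (hcb : ∀ t, c t ≤ b i) :
    Antitone (glueSuffix b i c) := by
  intro j j' hjj'
  rw [Fin.le_def] at hjj'
  unfold _root_.glueSuffix
  split_ifs with hj' hj hj
  · exact hb (Fin.le_def.mpr hjj')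
  · omega
  · exact (hcb _).trans (hb (Fin.le_def.mpr (by omega)))
  · exact hc (Fin.le_def.mpr (by simp only; omega))

end Suffix

lemma Fin.lt_card_filter_iff_of_antitone {m : ℕ} {p : Fin m → Prop} [DecidablePred p]
    (hp : Antitone p) (i : Fin m) : (i : ℕ) < #(univ.filter p) ↔ p i := by
  constructor
  · intro hi
    by_contra hpi
    have hsub : univ.filter p ⊆ Iio i := fun j hj => by
      have hj : p j := (mem_filter.mp hj).2
      exact mem_Iio.mpr (lt_of_not_ge fun hij => hpi (hp hij hj))
    have := card_le_card hsub
    rw [Fin.card_Iio] at this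
    omega
  · intro hpi
    have hsub : Iic i ⊆ univ.filter p := fun j hj =>
      mem_filter.mpr ⟨mem_univ j, hp (mem_Iic.mp hj) hpi⟩
    have := card_le_card hsub
    rw [Fin.card_Iic] at this
    omega

lemma PSkn_finite (S k n : ℕ) : (PSkn S k n).Finite :=
  (Set.finite_Iic (fun _ : Fin n => k)).subset fun _ hb => hb.2.1

lemma fIdx_eq_sum_of_antitone (S : ℕ) {m : ℕ} {b : Fin m → ℕ} (hb : Antitone b) :
    fIdx S b = ∑ i, if b i ≠ 0 then
      NSkn (S - ∑ j ∈ univ.filter (· < i), b j) (b i - 1) (m - i) else 0 := by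
  have hnz : Antitone fun j => b j ≠ 0 := fun i j hij hj => by have := hb hij; omega
  simp only [fIdx, Fin.lt_card_filter_iff_of_antitone hnz]

section LexBranch

variable {m : ℕ}

def lexBranch {α : Type*} [LT α] (s : Set (Fin m → α)) (b : Fin m → α) (i : Fin m) :
    Set (Fin m → α) :=
  {b' | b' ∈ s ∧ (∀ j, j < i → b' j = b j) ∧ b' i < b i}

lemma setOf_lex_lt_eq_iUnion_lexBranch {α : Type*} [LT α] (s : Set (Fin m → α))
    (b : Fin m → α) :
    {b' | b' ∈ s ∧ ∃ i, (∀ j, j < i → b' j = b j) ∧ b' i < b i} = ⋃ i, lexBranch s b i := by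
  ext b'
  simp only [lexBranch, Set.mem_iUnion, Set.mem_ofPred_eq]
  exact ⟨fun ⟨hs, i, hi⟩ => ⟨i, hs, hi⟩, fun ⟨i, hs, hi⟩ => ⟨hs, i, hi⟩⟩

lemma pairwise_disjoint_lexBranch {α : Type*} [Preorder α] (s : Set (Fin m → α))
    (b : Fin m → α) : Pairwise (Disjoint on (lexBranch s b)) := by
  have key : ∀ i j, i < j → Disjoint (lexBranch s b i) (lexBranch s b j) :=
    fun i j hij => Set.disjoint_left.mpr fun b' hi hj => (hj.2.1 i hij ▸ hi.2.2).false
  intro i j hij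
  rcases hij.lt_or_gt with h | h
  · exact key i j h
  · exact (key j i h).symm

lemma lexBranch_eq_empty (s : Set (Fin m → ℕ)) {b : Fin m → ℕ} {i : Fin m} (hbi : b i = 0) :
    lexBranch s b i = ∅ :=
  Set.eq_empty_of_forall_notMem fun _ hb' => by have := hb'.2.2; omega

variable {S g : ℕ} {b : Fin m → ℕ} {i : Fin m}

lemma mapsTo_suffixFrom_lexBranch :
    Set.MapsTo (suffixFrom · i) (lexBranch (PSkn S g m) b i)
      (PSkn (S - ∑ j ∈ univ.filter (· < i), b j) (b i - 1) (m - i)) := by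
  rintro b' ⟨⟨hanti, -, hsum⟩, hpre, hlt⟩
  dsimp only
  refine ⟨hanti.suffixFrom i, fun t => ?_, ?_⟩
  · have : b' ⟨i + t, by omega⟩ ≤ b' i := hanti (Fin.le_def.mpr (by simp))
    simp only [suffixFrom]
    omega
  · have hsplit := sum_eq_sum_lt_add_sum_suffixFrom b' i
    have hpre_sum : ∑ j ∈ univ.filter (· < i), b' j = ∑ j ∈ univ.filter (· < i), b j :=
      sum_congr rfl fun j hj => hpre j (mem_filter.mp hj).2
    omega

lemma mapsTo_glueSuffix_lexBranch (hb : b ∈ PSkn S g m) (hbi : b i ≠ 0) :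
    Set.MapsTo (glueSuffix b i)
      (PSkn (S - ∑ j ∈ univ.filter (· < i), b j) (b i - 1) (m - i))
      (lexBranch (PSkn S g m) b i) := by
  obtain ⟨hanti, hle, hsum⟩ := hb
  rintro c ⟨hcanti, hcle, hcsum⟩
  have hpre : ∑ j ∈ univ.filter (· < i), b j ≤ S :=
    hsum ▸ sum_le_sum_of_subset (filter_subset _ _)
  refine ⟨⟨hanti.glueSuffix hcanti fun t => (hcle t).trans (Nat.sub_le _ _), fun j => ?_, ?_⟩,
    fun j hj => glueSuffix_of_lt b c hj, ?_⟩
  · unfold glueSuffix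
    split_ifs
    · exact hle j
    · exact (hcle _).trans ((Nat.sub_le _ _).trans (hle i))
  · have hsplit := sum_eq_sum_lt_add_sum_suffixFrom (glueSuffix b i c) i
    rw [suffixFrom_glueSuffix, hcsum,
      sum_congr rfl fun j hj => glueSuffix_of_lt b c (mem_filter.mp hj).2] at hsplit
    omega
  · rw [glueSuffix_self]
    have := hcle ⟨0, by omega⟩
    omega

lemma ncard_lexBranch (hb : b ∈ PSkn S g m) (hbi : b i ≠ 0) :
    (lexBranch (PSkn S g m) b i).ncard =
      NSkn (S - ∑ j ∈ univ.filter (· < i), b j) (b i - 1) (m - i) := by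
  have hinv : Set.InvOn (glueSuffix b i) (suffixFrom · i) (lexBranch (PSkn S g m) b i)
      (PSkn (S - ∑ j ∈ univ.filter (· < i), b j) (b i - 1) (m - i)) :=
    ⟨fun b' hb' => glueSuffix_suffixFrom hb'.2.1, fun c _ => suffixFrom_glueSuffix b i c⟩
  rw [NSkn, Nat.card_coe_set_eq]
  exact (hinv.bijOn mapsTo_suffixFrom_lexBranch (mapsTo_glueSuffix_lexBranch hb hbi)).ncard_eq

end LexBranch

theorem fIdx_eq_card_lex_lt_general (S g m : ℕ) (b : Fin m → ℕ) (hb : b ∈ PSkn S g m) :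
    fIdx S b = Nat.card {b' : Fin m → ℕ |
      b' ∈ PSkn S g m ∧ ∃ i : Fin m, (∀ j : Fin m, j < i → b' j = b j) ∧ b' i < b i} := by
  have hfin : ∀ i, (lexBranch (PSkn S g m) b i).Finite :=
    fun i => (PSkn_finite S g m).subset fun _ hb' => hb'.1
  rw [setOf_lex_lt_eq_iUnion_lexBranch, Nat.card_coe_set_eq,
    Set.ncard_iUnion_of_finite hfin (pairwise_disjoint_lexBranch _ b), finsum_eq_sum_of_fintype,
    fIdx_eq_sum_of_antitone S hb.1]
  refine sum_congr rfl fun i _ => ?_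
  split_ifs with hbi
  · exact (ncard_lexBranch hb hbi).symm
  · rw [lexBranch_eq_empty _ (not_not.mp hbi), Set.ncard_empty]

/-- `f(b)` counts the tuples of `P_{S,g,m}` that are strictly smaller than `b` in the
lexicographic order: `f(b) = |{b' ∈ P_{S,g,m} : b' <_lex b}|`. -/
theorem fIdx_eq_card_lex_lt (S g m : ℕ) (hg : 1 ≤ g) (hm : 1 ≤ m) (hS : S ≤ m * g)
    (b : Fin m → ℕ) (hb : b ∈ PSkn S g m) :
    fIdx S b = Nat.card {b' : Fin m → ℕ |
      b' ∈ PSkn S g m ∧ ∃ i : Fin m, (∀ j : Fin m, j < i → b' j = b j) ∧ b' i < b i} :=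
  fIdx_eq_card_lex_lt_general S g m b hb
end
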